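/- arXiv:math/0611918 — 2 statements merged into one kernel-verified Lean document; each statement's English description precedes it below -/
import Mathlib

section
/- Let G be the group of fractions of a Garside monoid M with length-preserving relations and fundamental element δ. For every x ∈ G, ℓ_G(x) ≤ (2ℓ(δ) − 1)·ℓ(x), where ℓ is the minimal atom-length on G and ℓ_G the greedy length. -/
/-- Minimal length of `x` as a word in the alphabet `A ∪ A⁻¹`. -/
noncomputable def minLen {G : Type*} [Group G] (A : Set G) (x : G) : ℕ :=
  sInf {n | ∃ L : List G, (∀ g ∈ L, g ∈ A ∨ g⁻¹ ∈ A) ∧ L.prod = x ∧ L.length = n}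

/-!
Take a geodesic word for `x`, of length `n`, and replace each of its `m` inverse letters `a⁻¹` by
`δ⁻¹ ā` with `ā a = δ`. Conjugation by `δ` preserves positivity and length, so all the `δ⁻¹` can be
collected on the left: `x = δ⁻ᵐ y` with `y` positive and `ℓ(y) ≤ (n - m) + m (ℓ(δ) - 1)`.
If `x = δᵏ p₁⋯pᵣ` is the greedy form, then `y = δ^(m+k) p₁⋯pᵣ`, and `m + k ≥ 0` because `δ` does not
left-divide a left-weighted product of proper simples. Hence
`ℓ_G(x) = |k| ℓ(δ) + Σ ℓ(pᵢ) ≤ ℓ(y) + m ℓ(δ) ≤ n + 2m (ℓ(δ) - 1) ≤ (2ℓ(δ) - 1) n`.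
-/

section MinLen

variable {G : Type*} [Group G] {A : Set G}

lemma minLen_le_length {x : G} (L : List G) (hL : ∀ g ∈ L, g ∈ A ∨ g⁻¹ ∈ A)
    (hx : L.prod = x) : minLen A x ≤ L.length :=
  Nat.sInf_le ⟨L, hL, hx, rfl⟩

@[simp]
lemma minLen_one : minLen A (1 : G) = 0 :=
  Nat.eq_zero_of_le_zero (minLen_le_length [] (by simp) rfl)

lemma exists_word_length_eq_minLen {x : G} (hx : x ∈ Subgroup.closure A) :
    ∃ L : List G, (∀ g ∈ L, g ∈ A ∨ g⁻¹ ∈ A) ∧ L.prod = x ∧ L.length = minLen A x := by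
  rw [← Subgroup.mem_toSubmonoid, Subgroup.closure_toSubmonoid] at hx
  obtain ⟨L, hL, hLx⟩ := Submonoid.exists_list_of_mem_closure hx
  exact Nat.sInf_mem (s := {n | ∃ L : List G, (∀ g ∈ L, g ∈ A ∨ g⁻¹ ∈ A) ∧ L.prod = x ∧
    L.length = n}) ⟨L.length, L, hL, hLx, rfl⟩

lemma eq_one_of_minLen_eq_zero {x : G} (hx : x ∈ Subgroup.closure A) (h : minLen A x = 0) :
    x = 1 := by
  obtain ⟨L, -, rfl, hL⟩ := exists_word_length_eq_minLen hx
  rw [List.length_eq_zero_iff.mp (hL.trans h), List.prod_nil]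

end MinLen

namespace Submonoid

variable {G : Type*} [Group G] (M : Submonoid G)

def LeftDvd (a b : G) : Prop := ∃ c ∈ M, a * c = b

def IsLeftGcd (g a b : G) : Prop :=
  g ∈ M ∧ M.LeftDvd g a ∧ M.LeftDvd g b ∧
    ∀ d ∈ M, M.LeftDvd d a → M.LeftDvd d b → M.LeftDvd d g

variable {M}

lemma leftDvd_refl (a : G) : M.LeftDvd a a := ⟨1, M.one_mem, mul_one a⟩

lemma LeftDvd.trans {a b c : G} (hab : M.LeftDvd a b) (hbc : M.LeftDvd b c) :
    M.LeftDvd a c := by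
  obtain ⟨u, hu, rfl⟩ := hab
  obtain ⟨v, hv, rfl⟩ := hbc
  exact ⟨u * v, M.mul_mem hu hv, (mul_assoc a u v).symm⟩

lemma leftDvd_mul_left_iff (s a b : G) : M.LeftDvd (s * a) (s * b) ↔ M.LeftDvd a b := by
  simp only [LeftDvd, mul_assoc, mul_right_inj]

lemma LeftDvd.antisymm (hunit : ∀ t ∈ M, M.LeftDvd t 1 → t = 1) {a b : G}
    (hab : M.LeftDvd a b) (hba : M.LeftDvd b a) : a = b := by
  obtain ⟨u, hu, rfl⟩ := hab
  obtain ⟨v, hv, huv⟩ := hba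
  rw [mul_assoc, mul_eq_left] at huv
  rw [hunit u hu ⟨v, hv, huv⟩, mul_one]

lemma IsLeftGcd.eq_mul_of_isLeftGcd_mul (hunit : ∀ t ∈ M, M.LeftDvd t 1 → t = 1) {s a b g h : G}
    (hs : s ∈ M) (hg : M.IsLeftGcd g a b) (hh : M.IsLeftGcd h (s * a) (s * b)) :
    h = s * g := by
  obtain ⟨hgM, hga, hgb, hg_max⟩ := hg
  obtain ⟨-, hha, hhb, hh_max⟩ := hh
  have hs_sg : M.LeftDvd s (s * g) := ⟨g, hgM, rfl⟩
  have hsga := (leftDvd_mul_left_iff s g a).mpr hga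
  have hsgb := (leftDvd_mul_left_iff s g b).mpr hgb
  obtain ⟨u, hu, rfl⟩ := hh_max s hs (hs_sg.trans hsga) (hs_sg.trans hsgb)
  refine LeftDvd.antisymm hunit ((leftDvd_mul_left_iff s u g).mpr ?_)
    (hh_max _ (M.mul_mem hs hgM) hsga hsgb)
  exact hg_max u hu ((leftDvd_mul_left_iff s u a).mp hha) ((leftDvd_mul_left_iff s u b).mp hhb)

lemma nonneg_of_zpow_mul_mem {δ : G} (hδ : δ ∈ M) {j : ℤ} {z : G} (h : δ ^ j * z ∈ M)
    (hz : ¬ M.LeftDvd δ z) : 0 ≤ j := by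
  by_contra! hj
  obtain ⟨n, hn⟩ := Int.eq_ofNat_of_zero_le (by omega : 0 ≤ -j - 1)
  refine hz ⟨δ ^ n * (δ ^ j * z), M.mul_mem (M.pow_mem hδ n) h, ?_⟩
  rw [← zpow_natCast, ← hn]
  group

end Submonoid

section Garside

open Submonoid

variable {G : Type*} [Group G] {M : Submonoid G} {δ : G} {simple : G → Prop}
  {wedge : G → G → G}

def LeftWeighted (wedge : G → G → G) (δ a b : G) : Prop := wedge (a⁻¹ * δ) b = 1

lemma simple_inv_mul_delta (hcompl : ∀ s : G, simple s → ∃ c : G, simple c ∧ s * c = δ)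
    {s : G} (hs : simple s) : simple (s⁻¹ * δ) := by
  obtain ⟨c, hc, rfl⟩ := hcompl s hs
  rwa [inv_mul_cancel_left]

lemma leftDvd_delta_of_simple (hsimple_pos : ∀ s : G, simple s → s ∈ M)
    (hcompl : ∀ s : G, simple s → ∃ c : G, simple c ∧ s * c = δ) {s : G} (hs : simple s) :
    M.LeftDvd s δ := by
  obtain ⟨c, hc, hsc⟩ := hcompl s hs
  exact ⟨c, hsimple_pos c hc, hsc⟩

lemma wedge_delta_mul (hunit : ∀ t ∈ M, M.LeftDvd t 1 → t = 1)
    (hwedge : ∀ a ∈ M, ∀ b ∈ M, M.IsLeftGcd (wedge a b) a b) {s w : G} (hs : s ∈ M)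
    (hsδ : s⁻¹ * δ ∈ M) (hw : w ∈ M) :
    wedge δ (s * w) = s * wedge (s⁻¹ * δ) w := by
  have hδ : δ ∈ M := mul_inv_cancel_left s δ ▸ M.mul_mem hs hsδ
  refine IsLeftGcd.eq_mul_of_isLeftGcd_mul hunit hs (hwedge _ hsδ w hw) ?_
  rw [mul_inv_cancel_left]
  exact hwedge δ hδ _ (M.mul_mem hs hw)

lemma wedge_delta_prod_eq_head (hunit : ∀ t ∈ M, M.LeftDvd t 1 → t = 1)
    (hwedge : ∀ a ∈ M, ∀ b ∈ M, M.IsLeftGcd (wedge a b) a b)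
    (hsimple_pos : ∀ s : G, simple s → s ∈ M)
    (hcompl : ∀ s : G, simple s → ∃ c : G, simple c ∧ s * c = δ) :
    ∀ (P : List G) (p : G), (∀ q ∈ p :: P, simple q) →
      (p :: P).IsChain (LeftWeighted wedge δ) → wedge δ (p :: P).prod = p := by
  intro P
  induction P with
  | nil =>
    intro p hp _
    have hpM := hsimple_pos p (hp p (by simp))
    obtain ⟨c, hc, hpc⟩ := leftDvd_delta_of_simple hsimple_pos hcompl (hp p (by simp))
    have hδ : δ ∈ M := hpc ▸ M.mul_mem hpM hc
    obtain ⟨-, -, hwp, hw_max⟩ := hwedge δ hδ p (by simpa using hpM)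
    simp only [List.prod_cons, List.prod_nil, mul_one] at hwp hw_max ⊢
    exact LeftDvd.antisymm hunit hwp
      (hw_max p hpM (leftDvd_delta_of_simple hsimple_pos hcompl (hp p (by simp))) (leftDvd_refl p))
  | cons q P ih =>
    intro p hp hchain
    obtain ⟨hpq, hchain⟩ := List.isChain_cons_cons.mp hchain
    have hsp := hp p (by simp)
    have hpM := hsimple_pos p hsp
    have hpδ := simple_inv_mul_delta hcompl hsp
    have hpδM := hsimple_pos _ hpδ
    have hδ : δ ∈ M := mul_inv_cancel_left p δ ▸ M.mul_mem hpM hpδM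
    have hZ : (q :: P).prod ∈ M :=
      M.list_prod_mem fun z hz => hsimple_pos z (hp z (List.mem_cons_of_mem p hz))
    have hhead_q : wedge δ (q :: P).prod = q := ih q (fun z hz => hp z (by simp [hz])) hchain
    rw [List.prod_cons, wedge_delta_mul hunit hwedge hpM hpδM hZ]
    -- `t = gcd(p⁻¹δ, tail)` divides `δ` and the tail, hence their gcd `q`, hence `gcd(p⁻¹δ, q) = 1`
    obtain ⟨htM, htδ', htZ, -⟩ := hwedge _ hpδM _ hZ
    have htδ := htδ'.trans (leftDvd_delta_of_simple hsimple_pos hcompl hpδ)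
    have htq := (hwedge δ hδ _ hZ).2.2.2 _ htM htδ htZ
    rw [hhead_q] at htq
    have ht1 := (hwedge _ hpδM q (hsimple_pos q (hp q (by simp)))).2.2.2 _ htM htδ' htq
    rw [show wedge (p⁻¹ * δ) q = 1 from hpq] at ht1
    rw [hunit _ htM ht1, mul_one]

lemma not_leftDvd_delta_prod (hunit : ∀ t ∈ M, M.LeftDvd t 1 → t = 1)
    (hwedge : ∀ a ∈ M, ∀ b ∈ M, M.IsLeftGcd (wedge a b) a b)
    (hsimple_pos : ∀ s : G, simple s → s ∈ M)
    (hcompl : ∀ s : G, simple s → ∃ c : G, simple c ∧ s * c = δ) (hδ : δ ∈ M) (hδ1 : δ ≠ 1)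
    {P : List G} (hP : ∀ p ∈ P, simple p ∧ p ≠ δ) (hchain : P.IsChain (LeftWeighted wedge δ)) :
    ¬ M.LeftDvd δ P.prod := by
  intro hδP
  cases P with
  | nil => exact hδ1 (hunit δ hδ hδP)
  | cons p P =>
    have hPM : (p :: P).prod ∈ M := M.list_prod_mem fun z hz => hsimple_pos z (hP z hz).1
    have hδp := (hwedge δ hδ _ hPM).2.2.2 δ hδ (leftDvd_refl δ) hδP
    rw [wedge_delta_prod_eq_head hunit hwedge hsimple_pos hcompl P p
      (fun q hq => (hP q hq).1) hchain] at hδp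
    exact (hP p (by simp)).2
      (LeftDvd.antisymm hunit (leftDvd_delta_of_simple hsimple_pos hcompl (hP p (by simp)).1) hδp)

end Garside

section Length

variable {G : Type*} [Group G] {A : Set G} {M : Submonoid G}

def MinLenAdditive (M : Submonoid G) (A : Set G) : Prop :=
  ∀ a ∈ M, ∀ b ∈ M, minLen A (a * b) = minLen A a + minLen A b

lemma mem_subgroupClosure_of_mem (hgen : Submonoid.closure A = M) {c : G} (hc : c ∈ M) :
    c ∈ Subgroup.closure A :=
  Subgroup.le_closure_toSubmonoid A (hgen ▸ hc)

lemma eq_one_of_leftDvd_one (hgen : Submonoid.closure A = M) (hadd : MinLenAdditive M A) :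
    ∀ t ∈ M, M.LeftDvd t 1 → t = 1 := by
  rintro t ht ⟨c, hc, htc⟩
  have hlen := hadd t ht c hc
  rw [htc, minLen_one] at hlen
  exact eq_one_of_minLen_eq_zero (mem_subgroupClosure_of_mem hgen ht) (by omega)

lemma minLen_pow (hadd : MinLenAdditive M A) {g : G} (hg : g ∈ M) (n : ℕ) :
    minLen A (g ^ n) = n * minLen A g := by
  induction n with
  | zero => simp
  | succ n ih => rw [pow_succ, hadd _ (M.pow_mem hg n) _ hg, ih, add_one_mul]

lemma minLen_list_prod (hadd : MinLenAdditive M A) :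
    ∀ {P : List G}, (∀ p ∈ P, p ∈ M) → minLen A P.prod = (P.map (minLen A)).sum
  | [], _ => by simp
  | p :: P, hP => by
    rw [List.prod_cons, hadd p (hP p (by simp)) _ (M.list_prod_mem fun q hq => hP q (by simp [hq])),
      minLen_list_prod hadd fun q hq => hP q (by simp [hq]), List.map_cons, List.sum_cons]

def ConjPreserves (M : Submonoid G) (A : Set G) (g : G) : Prop :=
  ∀ c ∈ M, g * c * g⁻¹ ∈ M ∧ minLen A (g * c * g⁻¹) = minLen A c

lemma ConjPreserves.pow {g : G} (hg : ConjPreserves M A g) (n : ℕ) :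
    ConjPreserves M A (g ^ n) := by
  induction n with
  | zero => intro c hc; simpa using hc
  | succ n ih =>
    intro c hc
    obtain ⟨hc', hlen'⟩ := ih c hc
    obtain ⟨hc'', hlen''⟩ := hg _ hc'
    have hconj : g ^ (n + 1) * c * (g ^ (n + 1))⁻¹ = g * (g ^ n * c * (g ^ n)⁻¹) * g⁻¹ := by
      group
    rw [hconj]
    exact ⟨hc'', hlen''.trans hlen'⟩

lemma conjPreserves_of_forall_mem (hgen : Submonoid.closure A = M) (hadd : MinLenAdditive M A)
    {g : G} (hA : ∀ a ∈ A, g * a * g⁻¹ ∈ M ∧ minLen A (g * a * g⁻¹) = minLen A a) :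
    ConjPreserves M A g := by
  intro c hc
  rw [← hgen] at hc
  induction hc using Submonoid.closure_induction with
  | mem a ha => exact hA a ha
  | one => simp
  | mul x y hx hy ihx ihy =>
    have hconj : g * (x * y) * g⁻¹ = g * x * g⁻¹ * (g * y * g⁻¹) := by group
    rw [hconj, hadd _ ihx.1 _ ihy.1, hadd x (hgen ▸ hx) y (hgen ▸ hy), ihx.2, ihy.2]
    exact ⟨M.mul_mem ihx.1 ihy.1, rfl⟩

end Length

section Words

variable {G : Type*} [Group G] {A : Set G} {M : Submonoid G} {δ : G} {simple : G → Prop}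

lemma conjPreserves_delta (hgen : Submonoid.closure A = M) (hadd : MinLenAdditive M A)
    (hatom_simple : ∀ a ∈ A, simple a) (hsimple_pos : ∀ s : G, simple s → s ∈ M)
    (hcompl' : ∀ s : G, simple s → ∃ c : G, simple c ∧ c * s = δ) :
    ConjPreserves M A δ := by
  refine conjPreserves_of_forall_mem hgen hadd fun a ha => ?_
  obtain ⟨c, hc, hca⟩ := hcompl' a (hatom_simple a ha)
  obtain ⟨e, he, hec⟩ := hcompl' c hc
  have hconj : δ * a * δ⁻¹ = e :=
    calc δ * a * δ⁻¹ = e * c * a * (c * a)⁻¹ := by rw [hca, hec]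
      _ = e := by group
  have hlen_ec := hadd e (hsimple_pos e he) c (hsimple_pos c hc)
  have hlen_ca := hadd c (hsimple_pos c hc) a (hsimple_pos a (hatom_simple a ha))
  rw [hec] at hlen_ec
  rw [hca] at hlen_ca
  rw [hconj]
  exact ⟨hsimple_pos e he, by omega⟩

lemma exists_letter_eq_delta_pow_inv_mul (hgen : Submonoid.closure A = M)
    (hadd : MinLenAdditive M A) (hatom_simple : ∀ a ∈ A, simple a)
    (hsimple_pos : ∀ s : G, simple s → s ∈ M)
    (hcompl' : ∀ s : G, simple s → ∃ c : G, simple c ∧ c * s = δ) {g : G}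
    (hg : g ∈ A ∨ g⁻¹ ∈ A) :
    ∃ e ≤ 1, ∃ s ∈ M, g = (δ ^ e)⁻¹ * s ∧ minLen A s + 2 * e ≤ 1 + e * minLen A δ := by
  have hAM : A ⊆ M := hgen ▸ Submonoid.subset_closure
  rcases hg with hg | hg
  · refine ⟨0, zero_le_one, g, hAM hg, by simp, ?_⟩
    simpa using minLen_le_length [g] (by simp [hg]) rfl
  by_cases hg1 : g = 1
  · exact ⟨0, zero_le_one, 1, M.one_mem, by simp [hg1], by simp⟩
  -- `g = δ⁻¹ c` where `c g⁻¹ = δ`, and `ℓ(c) = ℓ(δ) - ℓ(g⁻¹) < ℓ(δ)` since `g⁻¹ ≠ 1`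
  obtain ⟨c, hc, hca⟩ := hcompl' _ (hatom_simple _ hg)
  refine ⟨1, le_rfl, c, hsimple_pos c hc, by rw [← hca]; group, ?_⟩
  have hlen := hadd c (hsimple_pos c hc) _ (hAM hg)
  rw [hca] at hlen
  have ha : minLen A g⁻¹ ≠ 0 := fun h =>
    hg1 (inv_eq_one.mp (eq_one_of_minLen_eq_zero (Subgroup.subset_closure hg) h))
  omega

/-- Each negative letter `a⁻¹ = δ⁻¹ ā` leaves its `δ⁻¹` on the left, moved past positive factors
by `s δ⁻ᵐ = δ⁻ᵐ (δᵐ s δ⁻ᵐ)`, and adds `ℓ(ā) ≤ ℓ(δ) - 1` to `ℓ(y)`; a positive letter adds at most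
`1`. -/
lemma exists_word_eq_delta_pow_inv_mul (hgen : Submonoid.closure A = M)
    (hadd : MinLenAdditive M A) (hatom_simple : ∀ a ∈ A, simple a)
    (hsimple_pos : ∀ s : G, simple s → s ∈ M)
    (hcompl' : ∀ s : G, simple s → ∃ c : G, simple c ∧ c * s = δ) :
    ∀ L : List G, (∀ g ∈ L, g ∈ A ∨ g⁻¹ ∈ A) → ∃ m ≤ L.length, ∃ y ∈ M,
      L.prod = (δ ^ m)⁻¹ * y ∧ minLen A y + 2 * m ≤ L.length + m * minLen A δ
  | [], _ => ⟨0, le_rfl, 1, M.one_mem, by simp, by simp⟩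
  | g :: L, hL => by
    obtain ⟨e, he, s, hs, rfl, hlen_s⟩ := exists_letter_eq_delta_pow_inv_mul hgen hadd
      hatom_simple hsimple_pos hcompl' (hL g (by simp))
    obtain ⟨m, hm, y, hy, hLy, hlen_y⟩ := exists_word_eq_delta_pow_inv_mul hgen hadd
      hatom_simple hsimple_pos hcompl' L fun g hg => hL g (by simp [hg])
    obtain ⟨hs', hlen_s'⟩ :=
      (conjPreserves_delta hgen hadd hatom_simple hsimple_pos hcompl').pow m s hs
    refine ⟨m + e, by simp only [List.length_cons]; omega, δ ^ m * s * (δ ^ m)⁻¹ * y,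
      M.mul_mem hs' hy, ?_, ?_⟩
    · rw [List.prod_cons, hLy, pow_add]
      group
    · rw [hadd _ hs' _ hy, hlen_s', List.length_cons, add_mul]
      omega

end Words

lemma le_two_mul_sub_one_mul {a m n d : ℕ} (hd : d ≠ 0) (hm : m ≤ n)
    (h : a + 2 * m ≤ n + 2 * m * d) : a ≤ (2 * d - 1) * n := by
  obtain ⟨e, rfl⟩ := Nat.exists_eq_succ_of_ne_zero hd
  rw [show 2 * (e + 1) - 1 = 2 * e + 1 by omega]
  nlinarith

theorem greedy_le_quasigeodesic_general {G : Type*} [Group G]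
    (M : Submonoid G) (A : Set G) (δ : G) (simple : G → Prop)
    (wedge : G → G → G) (ℓG : G → ℕ)
    -- M is generated by the atoms, and the relations are length preserving
    (hgen : Submonoid.closure A = M)
    (hadd : ∀ a ∈ M, ∀ b ∈ M, minLen A (a * b) = minLen A a + minLen A b)
    -- simple elements: positive, left-dividing δ, with simple complements
    (hatom_simple : ∀ a ∈ A, simple a)
    (hsimple_pos : ∀ s : G, simple s → s ∈ M)
    (hδ_simple : simple δ)
    (hcompl : ∀ s : G, simple s → ∃ c : G, simple c ∧ s * c = δ)
    (hcompl' : ∀ s : G, simple s → ∃ c : G, simple c ∧ c * s = δ)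
    -- `wedge` is the left gcd on positive elements
    (hwedge : ∀ a ∈ M, ∀ b ∈ M, wedge a b ∈ M ∧
      (∃ c ∈ M, wedge a b * c = a) ∧ (∃ c ∈ M, wedge a b * c = b) ∧
      ∀ d ∈ M, (∃ c ∈ M, d * c = a) → (∃ c ∈ M, d * c = b) →
        ∃ c ∈ M, d * c = wedge a b)
    -- greedy normal form `x = δ^k p₁⋯p_r` and the greedy length
    (hG : ∀ x : G, ∃ (k : ℤ) (P : List G),
      (∀ p ∈ P, simple p ∧ p ≠ δ ∧ p ≠ 1) ∧
      List.Chain' (fun a b => wedge (a⁻¹ * δ) b = 1) P ∧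
      x = δ ^ k * P.prod ∧
      ℓG x = k.natAbs * minLen A δ + (P.map (minLen A)).sum) :
    ∀ x : G, ℓG x ≤ (2 * minLen A δ - 1) * minLen A x := by
  intro x
  obtain ⟨k, P, hP, hchain, rfl, hℓG⟩ := hG x
  have hunit := eq_one_of_leftDvd_one hgen hadd
  have hδ := hsimple_pos δ hδ_simple
  have hPM : ∀ p ∈ P, p ∈ M := fun p hp => hsimple_pos p (hP p hp).1
  by_cases hδ1 : δ = 1
  · obtain rfl : P = [] := List.eq_nil_iff_forall_not_mem.mpr fun p hp => (hP p hp).2.2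
      (hunit p (hPM p hp) (hδ1 ▸ leftDvd_delta_of_simple hsimple_pos hcompl (hP p hp).1))
    rw [hℓG, hδ1]
    simp
  obtain ⟨L, hL, hLx, hLlen⟩ := exists_word_length_eq_minLen (Subgroup.mul_mem _
    (Subgroup.zpow_mem _ (mem_subgroupClosure_of_mem hgen hδ) k)
    (mem_subgroupClosure_of_mem hgen (M.list_prod_mem hPM)))
  obtain ⟨m, hm, y, hy, hLy, hlen_y⟩ :=
    exists_word_eq_delta_pow_inv_mul hgen hadd hatom_simple hsimple_pos hcompl' L hL
  have hyP : y = δ ^ ((m : ℤ) + k) * P.prod := by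
    rw [zpow_add, zpow_natCast, mul_assoc, ← hLx, hLy, mul_inv_cancel_left]
  have hmk : 0 ≤ (m : ℤ) + k := M.nonneg_of_zpow_mul_mem hδ (hyP ▸ hy)
    (not_leftDvd_delta_prod hunit hwedge hsimple_pos hcompl hδ hδ1
      (fun p hp => ⟨(hP p hp).1, (hP p hp).2.1⟩) hchain)
  obtain ⟨q, hq⟩ := Int.eq_ofNat_of_zero_le hmk
  have hlen_y' : minLen A y = q * minLen A δ + (P.map (minLen A)).sum := by
    rw [hyP, hq, zpow_natCast, hadd _ (M.pow_mem hδ q) _ (M.list_prod_mem hPM),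
      minLen_pow hadd hδ, minLen_list_prod hadd hPM]
  have hd : minLen A δ ≠ 0 := fun h =>
    hδ1 (eq_one_of_minLen_eq_zero (mem_subgroupClosure_of_mem hgen hδ) h)
  have hk : k.natAbs ≤ q + m := by omega
  rw [hℓG, ← hLlen]
  refine le_two_mul_sub_one_mul hd hm ?_
  have := Nat.mul_le_mul_right (minLen A δ) hk
  nlinarith

/-- Let `G` be the group of fractions of a Garside monoid `M` with
length-preserving relations, atom set `A`, and fundamental element `δ`.  For every
`x ∈ G`, `ℓ_G(x) ≤ (2ℓ(δ) − 1)·ℓ(x)`, where `ℓ = minLen A` is the minimal length over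
the atoms and their inverses and `ℓG` is the greedy length. -/
theorem greedy_le_quasigeodesic {G : Type*} [Group G]
    (M : Submonoid G) (A : Set G) (δ : G) (simple : G → Prop)
    (wedge : G → G → G) (ℓG ℓR : G → ℕ)
    -- M is generated by the atoms, and the relations are length preserving
    (hgen : Submonoid.closure A = M)
    (hadd : ∀ a ∈ M, ∀ b ∈ M, minLen A (a * b) = minLen A a + minLen A b)
    -- simple elements: positive, left-dividing δ, with simple complements
    (hatom_simple : ∀ a ∈ A, simple a)
    (hsimple_pos : ∀ s : G, simple s → s ∈ M)
    (hδ_simple : simple δ)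
    (hcompl : ∀ s : G, simple s → ∃ c : G, simple c ∧ s * c = δ)
    (hcompl' : ∀ s : G, simple s → ∃ c : G, simple c ∧ c * s = δ)
    -- `wedge` is the left gcd on positive elements
    (hwedge : ∀ a ∈ M, ∀ b ∈ M, wedge a b ∈ M ∧
      (∃ c ∈ M, wedge a b * c = a) ∧ (∃ c ∈ M, wedge a b * c = b) ∧
      ∀ d ∈ M, (∃ c ∈ M, d * c = a) → (∃ c ∈ M, d * c = b) →
        ∃ c ∈ M, d * c = wedge a b)
    -- greedy normal form `x = δ^k p₁⋯p_r` and the greedy length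
    (hG : ∀ x : G, ∃ (k : ℤ) (P : List G),
      (∀ p ∈ P, simple p ∧ p ≠ δ ∧ p ≠ 1) ∧
      List.Chain' (fun a b => wedge (a⁻¹ * δ) b = 1) P ∧
      x = δ ^ k * P.prod ∧
      ℓG x = k.natAbs * minLen A δ + (P.map (minLen A)).sum)
    -- rational normal form `x = (s₁⋯s_k)⁻¹(p₁⋯p_l)` and the rational length
    (hR : ∀ x : G, ∃ U V : List G,
      (∀ s ∈ U ++ V, simple s ∧ s ≠ 1) ∧
      List.Chain' (fun a b => wedge (a⁻¹ * δ) b = 1) U ∧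
      List.Chain' (fun a b => wedge (a⁻¹ * δ) b = 1) V ∧
      wedge U.prod V.prod = 1 ∧
      x = U.prod⁻¹ * V.prod ∧
      ℓR x = ((U ++ V).map (minLen A)).sum) :
    ∀ x : G, ℓG x ≤ (2 * minLen A δ - 1) * minLen A x :=
  greedy_le_quasigeodesic_general M A δ simple wedge ℓG hgen hadd hatom_simple hsimple_pos hδ_simple
    hcompl hcompl' hwedge hG
end

section
/- In the Artin presentation of B_N (N ≥ 3), the element x = σ₂²σ₁⁻² has minimal Artin word length ℓ(x) = 4 and rational Artin length ℓ_R(x) = 8; in particular ℓ_R(x) = 2·ℓ(x). -/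
/-- The braid relations on `N` strands (generators indexed by `Fin (N-1)`,
generator `i` representing `σ_{i+1}`). -/
def braidRels (N : ℕ) : Set (FreeGroup (Fin (N - 1))) :=
  {r | (∃ i j : Fin (N - 1), (i : ℕ) + 1 = (j : ℕ) ∧
          r = FreeGroup.of i * FreeGroup.of j * FreeGroup.of i *
              (FreeGroup.of j * FreeGroup.of i * FreeGroup.of j)⁻¹) ∨
       (∃ i j : Fin (N - 1), (i : ℕ) + 2 ≤ (j : ℕ) ∧
          r = FreeGroup.of i * FreeGroup.of j * (FreeGroup.of j * FreeGroup.of i)⁻¹)}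

/-- The braid group `B_N` with Artin's presentation. -/
abbrev BraidGroup (N : ℕ) := PresentedGroup (braidRels N)

/-- The Artin generator `σ_i` (1-based index, `1 ≤ i ≤ N-1`). -/
noncomputable def sigma (N : ℕ) (i : ℕ) : BraidGroup N :=
  if h : i - 1 < N - 1 then PresentedGroup.of (⟨i - 1, h⟩ : Fin (N - 1)) else 1

/-- The set of Artin generators of `B_N`. -/
def artinGens (N : ℕ) : Set (BraidGroup N) :=
  {x | ∃ i : ℕ, 1 ≤ i ∧ i ≤ N - 1 ∧ x = sigma N i}

/-- Minimal length of `x` as a positive word in the alphabet `A`. -/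
noncomputable def posLen {G : Type*} [Group G] (A : Set G) (x : G) : ℕ :=
  sInf {n | ∃ L : List G, (∀ g ∈ L, g ∈ A) ∧ L.prod = x ∧ L.length = n}

open Multiplicative

section WordLength

variable {G : Type*} [Group G]

lemma sInf_length_eq {P : G → Prop} {x : G} {L : List G} (hL : ∀ g ∈ L, P g) (hLx : L.prod = x)
    (hmin : ∀ L' : List G, (∀ g ∈ L', P g) → L'.prod = x → L.length ≤ L'.length) :
    sInf {n | ∃ L' : List G, (∀ g ∈ L', P g) ∧ L'.prod = x ∧ L'.length = n} = L.length :=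
  le_antisymm (Nat.sInf_le ⟨L, hL, hLx, rfl⟩)
    (le_csInf ⟨_, L, hL, hLx, rfl⟩ fun _ ⟨L', hL', hL'x, hn⟩ => hn ▸ hmin L' hL' hL'x)

lemma minLen_eq_length {A : Set G} {x : G} {L : List G} (hL : ∀ g ∈ L, g ∈ A ∨ g⁻¹ ∈ A)
    (hLx : L.prod = x) (hmin : ∀ L' : List G, (∀ g ∈ L', g ∈ A ∨ g⁻¹ ∈ A) → L'.prod = x →
      L.length ≤ L'.length) :
    minLen A x = L.length :=
  sInf_length_eq hL hLx hmin

lemma posLen_eq_length {A : Set G} {x : G} {L : List G} (hL : ∀ g ∈ L, g ∈ A)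
    (hLx : L.prod = x) (hmin : ∀ L' : List G, (∀ g ∈ L', g ∈ A) → L'.prod = x →
      L.length ≤ L'.length) :
    posLen A x = L.length :=
  sInf_length_eq hL hLx hmin

end WordLength

lemma inv_mul_eq_sq_mul_inv_sq_of_braid {G : Type*} [Group G] {a b : G}
    (h : a * b * a = b * a * b) :
    (a * b * b * a)⁻¹ * (b * a * a * b) = b ^ 2 * a⁻¹ ^ 2 := by
  have key : b * a * a * b * (a * a) = a * b * b * a * (b * b) :=
    calc b * a * a * b * (a * a) = b * a * (a * b * a) * a := by simp only [mul_assoc]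
      _ = (b * a * b) * (a * b * a) := by
        conv_lhs => rw [h]
        simp only [mul_assoc]
      _ = (a * b * a) * (b * a * b) := by rw [h]
      _ = a * b * (a * b * a) * b := by simp only [mul_assoc]
      _ = a * b * b * a * (b * b) := by
        conv_lhs => rw [h]
        simp only [mul_assoc]
  rw [inv_mul_eq_iff_eq_mul, pow_two, pow_two, ← mul_inv_rev, ← mul_assoc, eq_mul_inv_iff_mul_eq,
    key]

section MulAutArrow

variable {G A M : Type*} [Group G] [MulAction G A] [Monoid M]

lemma mulAutArrow_apply_apply' (g : G) (f : A → M) (a : A) :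
    mulAutArrow g f a = f (g⁻¹ • a) :=
  rfl

lemma mulAutArrow_mulSingle [DecidableEq A] (g : G) (a : A) (m : M) :
    mulAutArrow g (Pi.mulSingle a m) = Pi.mulSingle (g • a) m := by
  funext b
  simp only [mulAutArrow_apply_apply', Pi.mulSingle_apply, inv_smul_eq_iff]

end MulAutArrow

namespace Sym2

variable {M α : Type*} [Monoid M] [MulAction M α]

instance : MulAction M (Sym2 α) where
  smul g := Sym2.map (g • ·)
  one_smul := Sym2.ind fun a b => by
    change Sym2.map _ s(a, b) = s(a, b)
    rw [Sym2.map_mk, one_smul, one_smul]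
  mul_smul g h := Sym2.ind fun a b => by
    change Sym2.map _ s(a, b) = Sym2.map _ (Sym2.map _ s(a, b))
    simp only [Sym2.map_mk, mul_smul]

lemma smul_mk (g : M) (a b : α) : g • s(a, b) = s(g • a, g • b) := rfl

end Sym2

namespace BraidGroup

section CrossingGroup

variable {α : Type*}

/-- Signed crossing counts, one for each unordered pair of strands, twisted by the permutation of
the strands. -/
abbrev CrossingGroup (α : Type*) :=
  (Sym2 α → Multiplicative ℤ) ⋊[mulAutArrow] Equiv.Perm α

def linking (g : CrossingGroup α) (p : Sym2 α) : ℤ := toAdd (g.left p)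

lemma linking_mul (g h : CrossingGroup α) (p : Sym2 α) :
    linking (g * h) p = linking g p + linking h (g.right⁻¹ • p) :=
  rfl

lemma linking_inv (g : CrossingGroup α) (p : Sym2 α) :
    linking g⁻¹ p = -linking g (g.right • p) := by
  simp only [linking, SemidirectProduct.inv_left, mulAutArrow_apply_apply', inv_inv, Pi.inv_apply,
    toAdd_inv]

variable [DecidableEq α]

def crossingGen (a b : α) : CrossingGroup α :=
  ⟨Pi.mulSingle s(a, b) (ofAdd 1), Equiv.swap a b⟩

lemma linking_crossingGen (a b : α) (p : Sym2 α) :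
    linking (crossingGen a b) p = if p = s(a, b) then 1 else 0 := by
  simp only [linking, crossingGen, Pi.mulSingle_apply]
  split <;> rfl

lemma crossingGen_braid {a b c : α} (hab : a ≠ b) (hbc : b ≠ c) (hac : a ≠ c) :
    crossingGen a b * crossingGen b c * crossingGen a b =
      crossingGen b c * crossingGen a b * crossingGen b c := by
  have hc : Equiv.swap a b c = c := Equiv.swap_apply_of_ne_of_ne hac.symm hbc.symm
  have ha : Equiv.swap b c a = a := Equiv.swap_apply_of_ne_of_ne hab hac
  refine SemidirectProduct.ext ?_ ?_
  · simp only [crossingGen, SemidirectProduct.mul_left, SemidirectProduct.mul_right, map_mul,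
      mulAutArrow_mulSingle, MulAut.mul_apply, Sym2.smul_mk, Equiv.Perm.smul_def,
      Equiv.swap_apply_left, Equiv.swap_apply_right, ha, hc]
    simp only [mul_comm, mul_left_comm]
  · simp only [crossingGen, SemidirectProduct.mul_right]
    have h := Equiv.swap_mul_swap_mul_swap hbc.symm hac.symm
    rw [Equiv.swap_comm b a, Equiv.swap_comm c b] at h
    rw [h, Equiv.swap_mul_swap_mul_swap hab hac, Equiv.swap_comm]

lemma crossingGen_comm {a b c d : α} (hca : c ≠ a) (hcb : c ≠ b) (hda : d ≠ a) (hdb : d ≠ b) :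
    crossingGen a b * crossingGen c d = crossingGen c d * crossingGen a b := by
  have hc : Equiv.swap a b c = c := Equiv.swap_apply_of_ne_of_ne hca hcb
  have hd : Equiv.swap a b d = d := Equiv.swap_apply_of_ne_of_ne hda hdb
  have ha : Equiv.swap c d a = a := Equiv.swap_apply_of_ne_of_ne hca.symm hda.symm
  have hb : Equiv.swap c d b = b := Equiv.swap_apply_of_ne_of_ne hcb.symm hdb.symm
  refine SemidirectProduct.ext ?_ ?_
  · simp only [crossingGen, SemidirectProduct.mul_left, mulAutArrow_mulSingle, Sym2.smul_mk,
      Equiv.Perm.smul_def, ha, hb, hc, hd]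
    exact mul_comm _ _
  · simp only [crossingGen, SemidirectProduct.mul_right]
    rw [Equiv.mul_swap_eq_swap_mul, hc, hd]

lemma crossingGen_mul_self (a b : α) :
    crossingGen a b * crossingGen a b = ⟨Pi.mulSingle s(a, b) (ofAdd 1) ^ 2, 1⟩ := by
  refine SemidirectProduct.ext ?_ ?_
  · simp only [crossingGen, SemidirectProduct.mul_left, mulAutArrow_mulSingle, Sym2.smul_mk,
      Equiv.Perm.smul_def, Equiv.swap_apply_left, Equiv.swap_apply_right]
    rw [Sym2.eq_swap, pow_two]
  · simp [crossingGen]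

lemma crossingGen_mul_sq_mul (a b c d : α) :
    crossingGen a b * crossingGen c d * crossingGen c d * crossingGen a b =
      ⟨(Pi.mulSingle s(a, b) (ofAdd 1) *
        Pi.mulSingle (Equiv.swap a b • s(c, d)) (ofAdd 1)) ^ 2, 1⟩ := by
  refine SemidirectProduct.ext ?_ ?_
  · simp only [crossingGen, SemidirectProduct.mul_left, SemidirectProduct.mul_right, map_mul,
      mulAutArrow_mulSingle, MulAut.mul_apply, Sym2.smul_mk, Equiv.Perm.smul_def,
      Equiv.swap_apply_left, Equiv.swap_apply_right, Equiv.swap_apply_self]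
    rw [Sym2.eq_swap (a := b), Sym2.eq_swap (a := Equiv.swap a b d)]
    simp only [pow_two, mul_comm, mul_left_comm]
  · simp [crossingGen, mul_assoc]

end CrossingGroup

variable {N : ℕ}

def crossingRep (N : ℕ) : BraidGroup N →* CrossingGroup (Fin N) :=
  PresentedGroup.toGroup
    (f := fun i : Fin (N - 1) => crossingGen (α := Fin N) ⟨i, by omega⟩ ⟨i + 1, by omega⟩) <| by
    rintro r (⟨i, ⟨j, hj⟩, hij, rfl⟩ | ⟨i, j, hij, rfl⟩) <;>
      simp only [map_mul, map_inv, FreeGroup.lift_apply_of, mul_inv_eq_one]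
    · subst hij
      exact crossingGen_braid (by simp) (by simp) (by simp; omega)
    · exact crossingGen_comm (by simp; omega) (by simp; omega) (by simp; omega) (by simp; omega)

lemma crossingRep_of (i : Fin (N - 1)) :
    crossingRep N (PresentedGroup.of i) = crossingGen ⟨i, by omega⟩ ⟨i + 1, by omega⟩ :=
  PresentedGroup.toGroup.of _

def expSum (N : ℕ) : BraidGroup N →* Multiplicative ℤ :=
  PresentedGroup.toGroup (f := fun _ => ofAdd 1) <| by
    rintro r (⟨i, j, -, rfl⟩ | ⟨i, j, -, rfl⟩) <;>
      simp only [map_mul, map_inv, FreeGroup.lift_apply_of, mul_inv_eq_one]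

lemma expSum_of (i : Fin (N - 1)) : expSum N (PresentedGroup.of i) = ofAdd 1 :=
  PresentedGroup.toGroup.of _

lemma of_mul_of_mul_of {i j : Fin (N - 1)} (hij : (i : ℕ) + 1 = j) :
    (PresentedGroup.of i * PresentedGroup.of j * PresentedGroup.of i : BraidGroup N) =
      PresentedGroup.of j * PresentedGroup.of i * PresentedGroup.of j := by
  have h := PresentedGroup.mk_eq_mk_of_mul_inv_mem (rels := braidRels N) (Or.inl ⟨i, j, hij, rfl⟩)
  simp only [map_mul] at h
  exact h

lemma sigma_eq_of {i : ℕ} (h1 : 1 ≤ i) (h2 : i ≤ N - 1) :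
    sigma N i = PresentedGroup.of ⟨i - 1, by omega⟩ :=
  dif_pos _

lemma sigma_mem_artinGens {i : ℕ} (h1 : 1 ≤ i) (h2 : i ≤ N - 1) : sigma N i ∈ artinGens N :=
  ⟨i, h1, h2, rfl⟩

lemma exists_of_eq_of_mem_artinGens {g : BraidGroup N} (hg : g ∈ artinGens N) :
    ∃ i : Fin (N - 1), PresentedGroup.of i = g := by
  obtain ⟨i, h1, h2, rfl⟩ := hg
  exact ⟨_, (sigma_eq_of h1 h2).symm⟩

lemma crossingRep_sigma {i : ℕ} (h1 : 1 ≤ i) (h2 : i ≤ N - 1) :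
    crossingRep N (sigma N i) = crossingGen ⟨i - 1, by omega⟩ ⟨i, by omega⟩ := by
  rw [sigma_eq_of h1 h2, crossingRep_of]
  congr 2
  exact Nat.sub_add_cancel h1

lemma expSum_sigma {i : ℕ} (h1 : 1 ≤ i) (h2 : i ≤ N - 1) : expSum N (sigma N i) = ofAdd 1 := by
  rw [sigma_eq_of h1 h2, expSum_of]

lemma two_mul_linking_le_one_add_expSum {g : BraidGroup N}
    (hg : g ∈ artinGens N ∨ g⁻¹ ∈ artinGens N) (p : Sym2 (Fin N)) :
    2 * linking (crossingRep N g) p ≤ 1 + toAdd (expSum N g) := by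
  rcases hg with hg | hg
  · obtain ⟨i, rfl⟩ := exists_of_eq_of_mem_artinGens hg
    rw [crossingRep_of, expSum_of, linking_crossingGen]
    split <;> simp
  · obtain ⟨i, hi⟩ := exists_of_eq_of_mem_artinGens hg
    rw [← inv_inv g, ← hi, map_inv, map_inv, linking_inv, crossingRep_of, expSum_of,
      linking_crossingGen]
    split <;> simp

lemma two_mul_linking_le_length_add_expSum (L : List (BraidGroup N))
    (hL : ∀ g ∈ L, g ∈ artinGens N ∨ g⁻¹ ∈ artinGens N) (p : Sym2 (Fin N)) :
    2 * linking (crossingRep N L.prod) p ≤ L.length + toAdd (expSum N L.prod) := by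
  induction L generalizing p with
  | nil => simp [linking]
  | cons g L ih =>
    have hg := two_mul_linking_le_one_add_expSum (hL g List.mem_cons_self) p
    have hL := ih (fun h hh => hL h (List.mem_cons_of_mem g hh)) ((crossingRep N g).right⁻¹ • p)
    rw [List.prod_cons, map_mul, linking_mul, map_mul, toAdd_mul, List.length_cons]
    push_cast
    linarith

lemma toAdd_expSum_list_prod (L : List (BraidGroup N)) (hL : ∀ g ∈ L, g ∈ artinGens N) :
    toAdd (expSum N L.prod) = L.length := by
  induction L with
  | nil => simp
  | cons g L ih =>
    obtain ⟨i, rfl⟩ := exists_of_eq_of_mem_artinGens (hL _ List.mem_cons_self)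
    rw [List.prod_cons, map_mul, toAdd_mul, expSum_of, toAdd_ofAdd,
      ih fun h hh => hL h (List.mem_cons_of_mem _ hh), List.length_cons]
    push_cast
    ring

lemma posLen_artinGens_eq_length (L : List (BraidGroup N)) (hL : ∀ g ∈ L, g ∈ artinGens N)
    {x : BraidGroup N} (hLx : L.prod = x) :
    posLen (artinGens N) x = L.length := by
  refine posLen_eq_length hL hLx fun L' hL' hL'x => ?_
  have h := toAdd_expSum_list_prod L' hL'
  rw [hL'x, ← hLx, toAdd_expSum_list_prod L hL] at h
  omega

lemma linking_nonneg_of_mem_closure {m : BraidGroup N}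
    (hm : m ∈ Submonoid.closure (artinGens N)) (p : Sym2 (Fin N)) :
    0 ≤ linking (crossingRep N m) p := by
  induction hm using Submonoid.closure_induction generalizing p with
  | mem g hg =>
    obtain ⟨i, rfl⟩ := exists_of_eq_of_mem_artinGens hg
    rw [crossingRep_of, linking_crossingGen]
    split <;> simp
  | one => simp [linking]
  | mul g h _ _ hg hh =>
    rw [map_mul, linking_mul]
    exact add_nonneg (hg p) (hh _)

lemma one_le_linking_of_mul (i : Fin (N - 1)) {m : BraidGroup N}
    (hm : m ∈ Submonoid.closure (artinGens N)) :
    1 ≤ linking (crossingRep N (PresentedGroup.of i * m)) s(⟨i, by omega⟩, ⟨i + 1, by omega⟩) := by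
  rw [map_mul, linking_mul, crossingRep_of, linking_crossingGen, if_pos rfl]
  exact le_add_of_nonneg_right (linking_nonneg_of_mem_closure hm _)

lemma exists_eq_of_mul_of_mem_closure {d : BraidGroup N}
    (hd : d ∈ Submonoid.closure (artinGens N)) (hd1 : d ≠ 1) :
    ∃ i : Fin (N - 1), ∃ m ∈ Submonoid.closure (artinGens N), d = PresentedGroup.of i * m := by
  obtain ⟨L, hL, rfl⟩ := Submonoid.exists_list_of_mem_closure hd
  match L, hL, hd1 with
  | [], _, hd1 => exact absurd List.prod_nil hd1
  | g :: L, hL, _ =>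
    obtain ⟨i, rfl⟩ := exists_of_eq_of_mem_artinGens (hL g List.mem_cons_self)
    exact ⟨i, L.prod, Submonoid.list_prod_mem _ fun h hh =>
      Submonoid.subset_closure (hL h (List.mem_cons_of_mem _ hh)), List.prod_cons⟩

lemma sigma_one_mul_sigma_two_mul_sigma_one (hN : 3 ≤ N) :
    sigma N 1 * sigma N 2 * sigma N 1 = sigma N 2 * sigma N 1 * sigma N 2 := by
  rw [sigma_eq_of le_rfl (by omega), sigma_eq_of (by omega) (by omega)]
  exact of_mul_of_mul_of rfl

lemma eq_one_of_left_dvd_of_left_dvd (hN : 3 ≤ N) {d c c' : BraidGroup N}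
    (hd : d ∈ Submonoid.closure (artinGens N)) (hc : c ∈ Submonoid.closure (artinGens N))
    (hc' : c' ∈ Submonoid.closure (artinGens N))
    (hdu : d * c = sigma N 1 * sigma N 2 * sigma N 2 * sigma N 1)
    (hdv : d * c' = sigma N 2 * sigma N 1 * sigma N 1 * sigma N 2) :
    d = 1 := by
  by_contra hd1
  obtain ⟨i, m, hm, rfl⟩ := exists_eq_of_mul_of_mem_closure hd hd1
  have hu := one_le_linking_of_mul i (mul_mem hm hc)
  have hv := one_le_linking_of_mul i (mul_mem hm hc')
  rw [← mul_assoc, hdu] at hu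
  rw [← mul_assoc, hdv] at hv
  simp only [map_mul, crossingRep_sigma le_rfl (by omega : 1 ≤ N - 1),
    crossingRep_sigma (by omega : 1 ≤ 2) (by omega : 2 ≤ N - 1), crossingGen_mul_sq_mul] at hu hv
  -- in 0-based positions the supports are `{01, 02}` and `{12, 02}`, meeting only in `02`
  simp [linking, Pi.mulSingle_apply, Sym2.smul_mk, Equiv.swap_apply_def, Fin.ext_iff] at hu hv
  split_ifs at hu hv <;> simp at hu hv <;> omega

lemma linking_sigma_two_sq_mul_sigma_one_inv_sq (hN : 3 ≤ N) :
    linking (crossingRep N (sigma N 2 ^ 2 * (sigma N 1)⁻¹ ^ 2)) s(⟨1, by omega⟩, ⟨2, by omega⟩) =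
      2 := by
  rw [inv_pow, map_mul, map_inv, map_pow, map_pow, crossingRep_sigma le_rfl (by omega),
    crossingRep_sigma (by omega) (by omega), pow_two, pow_two, crossingGen_mul_self,
    crossingGen_mul_self, linking_mul, linking_inv]
  simp [linking]

lemma minLen_sigma_two_sq_mul_sigma_one_inv_sq (hN : 3 ≤ N) :
    minLen (artinGens N) (sigma N 2 ^ 2 * (sigma N 1)⁻¹ ^ 2) = 4 := by
  have h1 := sigma_mem_artinGens (N := N) le_rfl (by omega)
  have h2 := sigma_mem_artinGens (N := N) (i := 2) (by omega) (by omega)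
  refine minLen_eq_length (L := [sigma N 2, sigma N 2, (sigma N 1)⁻¹, (sigma N 1)⁻¹])
    (by simp [h1, h2]) (by simp [pow_two, mul_assoc]) fun L hL hLx => ?_
  have h := two_mul_linking_le_length_add_expSum L hL s(⟨1, by omega⟩, ⟨2, by omega⟩)
  rw [hLx, linking_sigma_two_sq_mul_sigma_one_inv_sq hN, map_mul, map_pow, map_pow, map_inv,
    expSum_sigma le_rfl (by omega), expSum_sigma (by omega) (by omega)] at h
  simpa using h

end BraidGroup

/-- In the Artin presentation of `B_N` (`N ≥ 3`), the element
`x = σ₂² σ₁⁻²` has minimal Artin word length `ℓ(x) = 4` and rational Artin length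
`ℓ_R(x) = 8`; in particular `ℓ_R(x) = 2·ℓ(x)`. -/
theorem rational_length_of_sigma2sq_sigma1_negsq (N : ℕ) (hN : 3 ≤ N)
    (M : Submonoid (BraidGroup N)) (hM : M = Submonoid.closure (artinGens N))
    (wedge : BraidGroup N → BraidGroup N → BraidGroup N) (ℓR : BraidGroup N → ℕ)
    -- `wedge` is the left gcd on positive braids
    (hwedge : ∀ a ∈ M, ∀ b ∈ M, wedge a b ∈ M ∧
      (∃ c ∈ M, wedge a b * c = a) ∧ (∃ c ∈ M, wedge a b * c = b) ∧
      ∀ d ∈ M, (∃ c ∈ M, d * c = a) → (∃ c ∈ M, d * c = b) →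
        ∃ c ∈ M, d * c = wedge a b)
    -- the rational length is computed from the rational normal form `y = u⁻¹ v`
    (hR : ∀ y : BraidGroup N, ∀ u ∈ M, ∀ v ∈ M, wedge u v = 1 → y = u⁻¹ * v →
      ℓR y = posLen (artinGens N) u + posLen (artinGens N) v) :
    minLen (artinGens N) (sigma N 2 ^ 2 * (sigma N 1)⁻¹ ^ 2) = 4 ∧
    ℓR (sigma N 2 ^ 2 * (sigma N 1)⁻¹ ^ 2) = 8 ∧
    ℓR (sigma N 2 ^ 2 * (sigma N 1)⁻¹ ^ 2) =
      2 * minLen (artinGens N) (sigma N 2 ^ 2 * (sigma N 1)⁻¹ ^ 2) := by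
  subst hM
  have h1 : sigma N 1 ∈ artinGens N := BraidGroup.sigma_mem_artinGens le_rfl (by omega)
  have h2 : sigma N 2 ∈ artinGens N := BraidGroup.sigma_mem_artinGens (by omega) (by omega)
  have m1 := Submonoid.subset_closure (s := artinGens N) h1
  have m2 := Submonoid.subset_closure (s := artinGens N) h2
  set u := sigma N 1 * sigma N 2 * sigma N 2 * sigma N 1
  set v := sigma N 2 * sigma N 1 * sigma N 1 * sigma N 2
  have hu : u ∈ Submonoid.closure (artinGens N) := mul_mem (mul_mem (mul_mem m1 m2) m2) m1
  have hv : v ∈ Submonoid.closure (artinGens N) := mul_mem (mul_mem (mul_mem m2 m1) m1) m2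
  have hgcd : wedge u v = 1 := by
    obtain ⟨hd, ⟨c, hc, hcu⟩, ⟨c', hc', hcv⟩, -⟩ := hwedge u hu v hv
    exact BraidGroup.eq_one_of_left_dvd_of_left_dvd hN hd hc hc' hcu hcv
  have hx : sigma N 2 ^ 2 * (sigma N 1)⁻¹ ^ 2 = u⁻¹ * v :=
    (inv_mul_eq_sq_mul_inv_sq_of_braid (BraidGroup.sigma_one_mul_sigma_two_mul_sigma_one hN)).symm
  have hℓR : ℓR (sigma N 2 ^ 2 * (sigma N 1)⁻¹ ^ 2) = 8 := by
    rw [hR _ u hu v hv hgcd hx,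
      BraidGroup.posLen_artinGens_eq_length [sigma N 1, sigma N 2, sigma N 2, sigma N 1]
        (by simp [h1, h2]) (by simp [u, mul_assoc]),
      BraidGroup.posLen_artinGens_eq_length [sigma N 2, sigma N 1, sigma N 1, sigma N 2]
        (by simp [h1, h2]) (by simp [v, mul_assoc])]
    rfl
  have hℓ := BraidGroup.minLen_sigma_two_sq_mul_sigma_one_inv_sq hN
  exact ⟨hℓ, hℓR, by rw [hℓR, hℓ]⟩
end
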